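/- (First-order condition, formula (A.3).) Fix n ≥ 1, σ > 0, μ ∈ ℝ, ρ = μ/σ, p = Φ(ρ), q = Φ(−ρ), f = φ(ρ), ν = σ·f/√(q·p·n). Define g : ℝ → ℝ by g(α) = μ·Φ(τ(α)) + ν·φ(τ(α)), where τ(α) = (p − α)·√(n/(q·p)). Then for every α ∈ ℝ, g′(α) = 0 if and only if −ρ = (α − p)·f/(q·p), i.e., if and only if α = α̂₀ := p·(1 − q·ρ/f). In particular, α̂₀ is the unique critical point of g. -/

import Mathlib

/-!
Since Φ' = φ and φ'(t) = -t φ(t), the chain rule through the affine map τ, whose slope is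
-√(n/(qp)) < 0, gives g'(α) = -√(n/(qp)) φ(τ α) (μ - ν τ α). The first two factors never vanish,
so g'(α) = 0 exactly when μ = ν τ α = σ f (p - α) / (qp); dividing by σ and solving for α
gives both forms of the condition.
-/

open MeasureTheory ProbabilityTheory

/-- The standard normal density φ(t) = (2π)^{-1/2} e^{-t²/2}. -/
noncomputable def stdNormalPDF (t : ℝ) : ℝ :=
  (Real.sqrt (2 * Real.pi))⁻¹ * Real.exp (-t ^ 2 / 2)

/-- The standard normal distribution function Φ(x) = ∫_{-∞}^x φ(t) dt. -/
noncomputable def stdNormalCDF (x : ℝ) : ℝ :=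
  ∫ t in Set.Iic x, stdNormalPDF t

lemma stdNormalPDF_pos (t : ℝ) : 0 < stdNormalPDF t := by
  unfold stdNormalPDF
  positivity

lemma continuous_stdNormalPDF : Continuous stdNormalPDF := by
  unfold stdNormalPDF
  fun_prop

lemma integrable_stdNormalPDF : Integrable stdNormalPDF := by
  have h : stdNormalPDF = fun t => (Real.sqrt (2 * Real.pi))⁻¹ * Real.exp (-(1 / 2) * t ^ 2) := by
    funext t
    unfold stdNormalPDF
    ring_nf
  rw [h]
  exact (integrable_exp_neg_mul_sq (by norm_num)).const_mul _

lemma stdNormalCDF_pos (x : ℝ) : 0 < stdNormalCDF x := by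
  unfold stdNormalCDF
  rw [setIntegral_pos_iff_support_of_nonneg_ae
    (Filter.Eventually.of_forall fun t => (stdNormalPDF_pos t).le)
    integrable_stdNormalPDF.integrableOn,
    Function.support_eq_univ fun t => (stdNormalPDF_pos t).ne', Set.univ_inter]
  simp

lemma hasDerivAt_stdNormalCDF (x : ℝ) : HasDerivAt stdNormalCDF (stdNormalPDF x) x := by
  have hsplit : stdNormalCDF = fun y => stdNormalCDF 0 + ∫ t in (0 : ℝ)..y, stdNormalPDF t := by
    funext y
    have h := intervalIntegral.integral_Iic_sub_Iic
      integrable_stdNormalPDF.integrableOn integrable_stdNormalPDF.integrableOn (a := 0) (b := y)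
    unfold stdNormalCDF at *
    linarith
  rw [hsplit]
  exact (intervalIntegral.integral_hasDerivAt_right
    (continuous_stdNormalPDF.intervalIntegrable _ _)
    (continuous_stdNormalPDF.stronglyMeasurableAtFilter _ _)
    continuous_stdNormalPDF.continuousAt).const_add _

lemma hasDerivAt_stdNormalPDF (x : ℝ) : HasDerivAt stdNormalPDF (-x * stdNormalPDF x) x := by
  have hexponent : HasDerivAt (fun t : ℝ => -t ^ 2 / 2) (-x) x :=
    (((hasDerivAt_pow 2 x).neg).div_const 2).congr_deriv (by ring)
  exact (hexponent.exp.const_mul (Real.sqrt (2 * Real.pi))⁻¹).congr_deriv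
    (by unfold stdNormalPDF; ring)

lemma HasDerivAt.mul_stdNormalCDF_add_mul_stdNormalPDF (μ ν : ℝ) {τ : ℝ → ℝ} {τ' x : ℝ}
    (hτ : HasDerivAt τ τ' x) :
    HasDerivAt (fun a => μ * stdNormalCDF (τ a) + ν * stdNormalPDF (τ a))
      (τ' * stdNormalPDF (τ x) * (μ - ν * τ x)) x :=
  ((((hasDerivAt_stdNormalCDF (τ x)).comp x hτ).const_mul μ).add
    (((hasDerivAt_stdNormalPDF (τ x)).comp x hτ).const_mul ν)).congr_deriv (by ring)

lemma Real.sqrt_div_div_sqrt_mul {a b : ℝ} (ha : 0 < a) (hb : 0 < b) :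
    Real.sqrt (b / a) / Real.sqrt (a * b) = 1 / a := by
  rw [← Real.sqrt_div (div_pos hb ha).le, show b / a / (a * b) = (1 / a) ^ 2 by field_simp,
    Real.sqrt_sq (by positivity)]

lemma neg_eq_sub_mul_div_iff {ρ p q f α : ℝ} (hqp : q * p ≠ 0) (hf : f ≠ 0) :
    -ρ = (α - p) * f / (q * p) ↔ α = p * (1 - q * ρ / f) := by
  rw [eq_div_iff hqp]
  constructor <;> intro h
  · field_simp
    linarith
  · rw [h]
    field_simp
    ring

/-- First-order condition (A.3): the derivative of the smoothed expected
increment vanishes exactly at α̂₀ = p(1 − qρ/f), the unique critical point. -/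
theorem first_order_condition
    (n : ℕ) (hn : 1 ≤ n) (μ σ : ℝ) (hσ : 0 < σ)
    (ρ p q f ν : ℝ) (hρ : ρ = μ / σ) (hp : p = stdNormalCDF ρ) (hq : q = stdNormalCDF (-ρ))
    (hf : f = stdNormalPDF ρ) (hν : ν = σ * f / Real.sqrt (q * p * n))
    (τ g : ℝ → ℝ)
    (hτ : ∀ α, τ α = (p - α) * Real.sqrt (n / (q * p)))
    (hg : ∀ α, g α = μ * stdNormalCDF (τ α) + ν * stdNormalPDF (τ α))
    (α : ℝ) :
    (deriv g α = 0 ↔ -ρ = (α - p) * f / (q * p)) ∧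
      (deriv g α = 0 ↔ α = p * (1 - q * ρ / f)) := by
  have hp0 : 0 < p := hp ▸ stdNormalCDF_pos ρ
  have hqp : 0 < q * p := mul_pos (hq ▸ stdNormalCDF_pos (-ρ)) hp0
  have hf0 : 0 < f := hf ▸ stdNormalPDF_pos ρ
  have hn0 : (0 : ℝ) < n := by exact_mod_cast hn
  have hslope : 0 < Real.sqrt (n / (q * p)) := Real.sqrt_pos.mpr (div_pos hn0 hqp)
  have hτ' : HasDerivAt τ (-Real.sqrt (n / (q * p))) α := by
    rw [funext hτ]
    simpa using ((hasDerivAt_id α).const_sub p).mul_const (Real.sqrt (n / (q * p)))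
  have hg' := funext hg ▸ hτ'.mul_stdNormalCDF_add_mul_stdNormalPDF μ ν
  have hντ : ν * τ α = σ * f * (p - α) / (q * p) := by
    calc ν * τ α
        = σ * f * (p - α) * (Real.sqrt (n / (q * p)) / Real.sqrt (q * p * n)) := by
          rw [hν, hτ]; ring
      _ = σ * f * (p - α) / (q * p) := by
          rw [Real.sqrt_div_div_sqrt_mul hqp hn0, mul_one_div]
  have hcrit : deriv g α = 0 ↔ μ = σ * f * (p - α) / (q * p) := by
    rw [hg'.deriv, ← hντ, mul_eq_zero, sub_eq_zero,
      or_iff_right (mul_ne_zero (neg_ne_zero.mpr hslope.ne') (stdNormalPDF_pos _).ne')]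
  have hfirst : deriv g α = 0 ↔ -ρ = (α - p) * f / (q * p) := by
    rw [hcrit, hρ, neg_eq_iff_eq_neg, ← neg_div, ← neg_mul, neg_sub, div_eq_iff hσ.ne']
    ring_nf
  exact ⟨hfirst, hfirst.trans (neg_eq_sub_mul_div_iff hqp.ne' hf0.ne')⟩
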